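/- arXiv:2306.13520 — 2 statements merged into one kernel-verified Lean document; each statement's English description precedes it below -/
import Mathlib

section
/- Let λ₁,…,λ_D be positive reals with arithmetic mean λ̄ and geometric mean g, and let Var(λ) be their empirical variance, λ_max the maximum, λ_min the minimum. Then Var(λ)/(2λ_max) ≤ λ̄ - g ≤ Var(λ)/(2λ_min). -/
private lemma cf_hasDerivAt_f (t : ℝ) (ht : 0 < t) :
    HasDerivAt (fun x => Real.log x - (x-1) + (x-1)^2/2) (t⁻¹ - 1 + (t-1)) t := by
  have h1 : HasDerivAt Real.log t⁻¹ t := Real.hasDerivAt_log ht.ne'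
  have h2 : HasDerivAt (fun x : ℝ => x - 1) 1 t := (hasDerivAt_id t).sub_const 1
  have h3 : HasDerivAt (fun x : ℝ => (x-1)^2/2) (t-1) t := by
    have : HasDerivAt (fun x : ℝ => (x-1)^2/2) (((2:ℕ):ℝ) * (t - 1) ^ (2 - 1) * 1 / 2) t :=
      (h2.pow 2).div_const 2
    convert this using 1
    push_cast; ring
  exact (h1.sub h2).add h3

private lemma cf_f_mono : MonotoneOn (fun x => Real.log x - (x-1) + (x-1)^2/2) (Set.Ioi (0:ℝ)) := by
  apply monotoneOn_of_deriv_nonneg (convex_Ioi 0)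
  · apply ContinuousOn.add
    · apply ContinuousOn.sub
      · exact Real.continuousOn_log.mono (by intro x hx; simpa using ne_of_gt hx)
      · fun_prop
    · fun_prop
  · intro x hx
    rw [interior_Ioi] at hx
    exact (cf_hasDerivAt_f x hx).differentiableAt.differentiableWithinAt
  · intro x hx
    rw [interior_Ioi] at hx
    rw [(cf_hasDerivAt_f x hx).deriv]
    have hx0 : x ≠ 0 := ne_of_gt (Set.mem_Ioi.mp hx)
    have h : x⁻¹ - 1 + (x-1) = (x-1)^2 / x := by field_simp; ring
    rw [h]
    exact div_nonneg (sq_nonneg _) (le_of_lt (Set.mem_Ioi.mp hx))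

private lemma cf_hasDerivAt_h (t : ℝ) (ht : 0 < t) :
    HasDerivAt (fun x => Real.log x - x/2 + x⁻¹/2) (t⁻¹ - 1/2 + (-(t^2)⁻¹/2)) t := by
  have h1 : HasDerivAt Real.log t⁻¹ t := Real.hasDerivAt_log ht.ne'
  have h2 : HasDerivAt (fun x : ℝ => x/2) (1/2) t := by
    simpa using (hasDerivAt_id t).div_const 2
  have h3 : HasDerivAt (fun x : ℝ => x⁻¹/2) (-(t^2)⁻¹/2) t := (hasDerivAt_inv ht.ne').div_const 2
  exact (h1.sub h2).add h3

private lemma cf_h_anti : AntitoneOn (fun x => Real.log x - x/2 + x⁻¹/2) (Set.Ioi (0:ℝ)) := by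
  apply antitoneOn_of_deriv_nonpos (convex_Ioi 0)
  · apply ContinuousOn.add
    · apply ContinuousOn.sub
      · exact Real.continuousOn_log.mono (by intro x hx; simpa using ne_of_gt hx)
      · fun_prop
    · apply ContinuousOn.div_const
      exact continuousOn_inv₀.mono (by intro x hx; simpa using ne_of_gt hx)
  · intro x hx
    rw [interior_Ioi] at hx
    exact (cf_hasDerivAt_h x hx).differentiableAt.differentiableWithinAt
  · intro x hx
    rw [interior_Ioi] at hx
    rw [(cf_hasDerivAt_h x hx).deriv]
    have hx0 : x ≠ 0 := ne_of_gt (Set.mem_Ioi.mp hx)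
    have h : x⁻¹ - 1/2 + (-(x^2)⁻¹/2) = -((x-1)^2 / (2*x^2)) := by field_simp; ring
    rw [h]
    simp only [neg_nonpos]
    positivity

private lemma cf_quad_ge (t : ℝ) (ht1 : 1 ≤ t) : t - 1 - (t-1)^2/2 ≤ Real.log t := by
  have h := cf_f_mono (Set.mem_Ioi.mpr one_pos) (Set.mem_Ioi.mpr (lt_of_lt_of_le one_pos ht1)) ht1
  simp only [Real.log_one] at h
  nlinarith [h]

private lemma cf_quad_le (t : ℝ) (ht : 0 < t) (ht1 : t ≤ 1) : Real.log t ≤ t - 1 - (t-1)^2/2 := by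
  have h := cf_f_mono (Set.mem_Ioi.mpr ht) (Set.mem_Ioi.mpr one_pos) ht1
  simp only [Real.log_one] at h
  nlinarith [h]

private lemma cf_sinh_le (t : ℝ) (ht1 : 1 ≤ t) : Real.log t ≤ t/2 - t⁻¹/2 := by
  have h := cf_h_anti (Set.mem_Ioi.mpr one_pos) (Set.mem_Ioi.mpr (lt_of_lt_of_le one_pos ht1)) ht1
  simp only [Real.log_one] at h
  norm_num at h
  linarith

private lemma cf_sinh_ge (t : ℝ) (ht : 0 < t) (ht1 : t ≤ 1) : t/2 - t⁻¹/2 ≤ Real.log t := by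
  have h := cf_h_anti (Set.mem_Ioi.mpr ht) (Set.mem_Ioi.mpr one_pos) ht1
  simp only [Real.log_one] at h
  norm_num at h
  linarith

private lemma cf_point_upper (t c : ℝ) (ht : 0 < t) (hc : 0 < c) (hct : c ≤ t) (hc1 : c ≤ 1) :
    t - 1 - Real.log t ≤ (t-1)^2/(2*c) := by
  rcases le_total 1 t with h1 | h1
  · have h2 := cf_quad_ge t h1
    have h3 : (t-1)^2/(2*1) ≤ (t-1)^2/(2*c) := by gcongr
    norm_num at h3
    linarith
  · have h2 := cf_sinh_ge t ht h1
    have e : t - 1 - (t/2 - t⁻¹/2) = (t-1)^2/(2*t) := by field_simp; ring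
    have h3 : t - 1 - Real.log t ≤ (t-1)^2/(2*t) := by rw [← e]; linarith
    have h4 : (t-1)^2/(2*t) ≤ (t-1)^2/(2*c) := by gcongr
    linarith

private lemma cf_point_lower (t M : ℝ) (ht : 0 < t) (htM : t ≤ M) (hM1 : 1 ≤ M) :
    (t-1)^2/(2*M) ≤ t - 1 - Real.log t := by
  rcases le_total 1 t with h1 | h1
  · have h2 := cf_sinh_le t h1
    have e : t - 1 - (t/2 - t⁻¹/2) = (t-1)^2/(2*t) := by
      field_simp
      ring
    have h3 : (t-1)^2/(2*t) ≤ t - 1 - Real.log t := by rw [← e]; linarith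
    have h4 : (t-1)^2/(2*M) ≤ (t-1)^2/(2*t) := by gcongr
    linarith
  · have h2 := cf_quad_le t ht h1
    have h4 : (t-1)^2/(2*M) ≤ (t-1)^2/(2*1) := by gcongr
    norm_num at h4
    linarith
/-- Cartwright–Field refinement of AM–GM: for positive reals `λ₁,…,λ_D` with arithmetic
mean `λ̄`, geometric mean `g`, empirical variance `Var(λ)`, maximum `lmax` and minimum
`lmin`, we have `Var(λ)/(2 lmax) ≤ λ̄ - g ≤ Var(λ)/(2 lmin)`. -/
theorem cartwright_field (D : ℕ) (hD : 0 < D) (l : Fin D → ℝ) (hpos : ∀ i, 0 < l i)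
    (lbar g v lmax lmin : ℝ)
    (hbar : lbar = (1 / D) * ∑ i, l i)
    (hg : g = (∏ i, l i) ^ ((1 : ℝ) / D))
    (hv : v = (1 / D) * ∑ i, (l i) ^ 2 - lbar ^ 2)
    (hmax : IsGreatest (Set.range l) lmax)
    (hmin : IsLeast (Set.range l) lmin) :
    v / (2 * lmax) ≤ lbar - g ∧ lbar - g ≤ v / (2 * lmin) := by
  have hDpos : (0:ℝ) < D := Nat.cast_pos.mpr hD
  have hDne : (D:ℝ) ≠ 0 := ne_of_gt hDpos
  have hmle : ∀ i, lmin ≤ l i := fun i => hmin.2 ⟨i, rfl⟩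
  have hMge : ∀ i, l i ≤ lmax := fun i => hmax.2 ⟨i, rfl⟩
  obtain ⟨i₀, hi₀⟩ := hmin.1
  have hmpos : 0 < lmin := hi₀ ▸ hpos i₀
  have hMpos : 0 < lmax := lt_of_lt_of_le hmpos (hi₀ ▸ hMge i₀)
  have hsum : ∑ i, l i = D * lbar := by rw [hbar]; field_simp
  have hmA : lmin ≤ lbar := by
    have h1 : (D:ℝ) * lmin ≤ ∑ i, l i := by
      calc (D:ℝ) * lmin = ∑ _i : Fin D, lmin := by
            simp [Finset.sum_const, Finset.card_univ, mul_comm]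
        _ ≤ ∑ i, l i := Finset.sum_le_sum fun i _ => hmle i
    rw [hsum] at h1
    exact le_of_mul_le_mul_left h1 hDpos
  have hAM : lbar ≤ lmax := by
    have h1 : ∑ i, l i ≤ (D:ℝ) * lmax := by
      calc ∑ i, l i ≤ ∑ _i : Fin D, lmax := Finset.sum_le_sum fun i _ => hMge i
        _ = (D:ℝ) * lmax := by simp [Finset.sum_const, Finset.card_univ, mul_comm]
    rw [hsum] at h1
    exact le_of_mul_le_mul_left h1 hDpos
  have hApos : 0 < lbar := lt_of_lt_of_le hmpos hmA
  have hprodpos : 0 < ∏ i, l i := Finset.prod_pos fun i _ => hpos i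
  have hgpos : 0 < g := by rw [hg]; positivity
  have hlogg : ∑ i, Real.log (l i) = D * Real.log g := by
    rw [hg, Real.log_rpow hprodpos, Real.log_prod fun i _ => (hpos i).ne']
    field_simp
  have hgM : g ≤ lmax := by
    rw [← Real.log_le_log_iff hgpos hMpos]
    have h1 : ∑ i, Real.log (l i) ≤ (D:ℝ) * Real.log lmax := by
      calc ∑ i, Real.log (l i) ≤ ∑ _i : Fin D, Real.log lmax :=
            Finset.sum_le_sum fun i _ => Real.log_le_log (hpos i) (hMge i)
        _ = (D:ℝ) * Real.log lmax := by simp [Finset.sum_const, Finset.card_univ, mul_comm]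
    rw [hlogg] at h1
    exact le_of_mul_le_mul_left h1 hDpos
  have hmg : lmin ≤ g := by
    rw [← Real.log_le_log_iff hmpos hgpos]
    have h1 : (D:ℝ) * Real.log lmin ≤ ∑ i, Real.log (l i) := by
      calc (D:ℝ) * Real.log lmin = ∑ _i : Fin D, Real.log lmin := by
            simp [Finset.sum_const, Finset.card_univ, mul_comm]
        _ ≤ ∑ i, Real.log (l i) := Finset.sum_le_sum fun i _ => Real.log_le_log hmpos (hmle i)
    rw [hlogg] at h1
    exact le_of_mul_le_mul_left h1 hDpos
  -- variance as a sum of squared deviations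
  have eS : ∑ i, (l i - lbar)^2 = ∑ i, (l i)^2 - (D:ℝ) * lbar^2 := by
    have e : ∀ i : Fin D, (l i - lbar)^2 = (l i)^2 - 2*lbar*(l i) + lbar^2 := fun i => by ring
    rw [Finset.sum_congr rfl fun i _ => e i, Finset.sum_add_distrib, Finset.sum_sub_distrib,
      ← Finset.mul_sum, hsum, Finset.sum_const, Finset.card_univ, Fintype.card_fin,
      nsmul_eq_mul]
    ring
  have hSv : v = (∑ i, (l i - lbar)^2) / D := by
    rw [hv, eS]
    field_simp
  constructor
  · -- lower bound : v/(2 lmax) ≤ lbar - g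
    have keyL : ∀ i : Fin D,
        (l i - g)^2 / (2 * lmax * g) ≤ l i / g - 1 - Real.log (l i / g) := by
      intro i
      have h := cf_point_lower (l i / g) (lmax / g) (div_pos (hpos i) hgpos)
        (by gcongr; exact hMge i) (by rw [le_div_iff₀ hgpos]; simpa using hgM)
      calc (l i - g)^2 / (2 * lmax * g) = (l i / g - 1)^2 / (2 * (lmax / g)) := by
            field_simp
        _ ≤ l i / g - 1 - Real.log (l i / g) := h
    have sumL : (∑ i, (l i - g)^2) / (2 * lmax * g) ≤ (D:ℝ) * (lbar - g) / g := by
      have h := Finset.sum_le_sum fun i (_ : i ∈ Finset.univ) => keyL i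
      have lhs : ∑ i, (l i - g)^2 / (2 * lmax * g) = (∑ i, (l i - g)^2) / (2 * lmax * g) := by
        rw [Finset.sum_div]
      have rhs : ∑ i, (l i / g - 1 - Real.log (l i / g)) = (D:ℝ) * (lbar - g) / g := by
        have e : ∀ i : Fin D, l i / g - 1 - Real.log (l i / g)
            = l i / g - 1 - Real.log (l i) + Real.log g := fun i => by
          rw [Real.log_div (hpos i).ne' hgpos.ne']; ring
        rw [Finset.sum_congr rfl fun i _ => e i, Finset.sum_add_distrib,
          Finset.sum_sub_distrib, Finset.sum_sub_distrib, ← Finset.sum_div, hsum, hlogg,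
          Finset.sum_const, Finset.card_univ, Fintype.card_fin, nsmul_eq_mul]
        simp only [Finset.sum_const, Finset.card_univ, Fintype.card_fin, nsmul_eq_mul]
        field_simp
        ring
      rw [lhs, rhs] at h
      exact h
    -- hence lbar - g ≥ (∑ (l i - g)^2)/(2 lmax D)
    have hstep : (∑ i, (l i - g)^2) / (2 * lmax * D) ≤ lbar - g := by
      have h := mul_le_mul_of_nonneg_left sumL (le_of_lt (show (0:ℝ) < g / D by positivity))
      calc (∑ i, (l i - g)^2) / (2 * lmax * D)
          = (g / D) * ((∑ i, (l i - g)^2) / (2 * lmax * g)) := by field_simp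
        _ ≤ (g / D) * ((D:ℝ) * (lbar - g) / g) := h
        _ = lbar - g := by field_simp
    -- ∑ (l i - lbar)^2 ≤ ∑ (l i - g)^2
    have hSS : ∑ i, (l i - lbar)^2 ≤ ∑ i, (l i - g)^2 := by
      have eS' : ∑ i, (l i - g)^2 = ∑ i, (l i)^2 - 2*g*((D:ℝ)*lbar) + (D:ℝ)*g^2 := by
        have e : ∀ i : Fin D, (l i - g)^2 = (l i)^2 - 2*g*(l i) + g^2 := fun i => by ring
        rw [Finset.sum_congr rfl fun i _ => e i, Finset.sum_add_distrib, Finset.sum_sub_distrib,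
          ← Finset.mul_sum, hsum, Finset.sum_const, Finset.card_univ, Fintype.card_fin,
          nsmul_eq_mul]
      rw [eS, eS']
      nlinarith [sq_nonneg (lbar - g), hDpos]
    calc v / (2 * lmax) = (∑ i, (l i - lbar)^2) / (2 * lmax * D) := by rw [hSv]; ring
      _ ≤ (∑ i, (l i - g)^2) / (2 * lmax * D) := by gcongr
      _ ≤ lbar - g := hstep
  · -- upper bound : lbar - g ≤ v/(2 lmin)
    have keyU : ∀ i : Fin D,
        l i / lbar - 1 - Real.log (l i / lbar) ≤ (l i - lbar)^2 / (2 * lmin * lbar) := by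
      intro i
      have h := cf_point_upper (l i / lbar) (lmin / lbar) (div_pos (hpos i) hApos) (by positivity)
        (by gcongr; exact hmle i) (by rw [div_le_one hApos]; exact hmA)
      calc l i / lbar - 1 - Real.log (l i / lbar)
          ≤ (l i / lbar - 1)^2 / (2 * (lmin / lbar)) := h
        _ = (l i - lbar)^2 / (2 * lmin * lbar) := by field_simp
    have sumU : (D:ℝ) * (Real.log lbar - Real.log g)
        ≤ (∑ i, (l i - lbar)^2) / (2 * lmin * lbar) := by
      have h := Finset.sum_le_sum fun i (_ : i ∈ Finset.univ) => keyU i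
      have rhs : ∑ i, (l i - lbar)^2 / (2 * lmin * lbar)
          = (∑ i, (l i - lbar)^2) / (2 * lmin * lbar) := by rw [Finset.sum_div]
      have lhs : ∑ i, (l i / lbar - 1 - Real.log (l i / lbar))
          = (D:ℝ) * (Real.log lbar - Real.log g) := by
        have e : ∀ i : Fin D, l i / lbar - 1 - Real.log (l i / lbar)
            = l i / lbar - 1 - Real.log (l i) + Real.log lbar := fun i => by
          rw [Real.log_div (hpos i).ne' hApos.ne']; ring
        rw [Finset.sum_congr rfl fun i _ => e i, Finset.sum_add_distrib,
          Finset.sum_sub_distrib, Finset.sum_sub_distrib, ← Finset.sum_div, hsum, hlogg,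
          Finset.sum_const, Finset.card_univ, Fintype.card_fin, nsmul_eq_mul]
        simp only [Finset.sum_const, Finset.card_univ, Fintype.card_fin, nsmul_eq_mul]
        field_simp
        ring
      rw [lhs, rhs] at h
      exact h
    have hexp : 1 - g / lbar ≤ Real.log lbar - Real.log g := by
      have h := Real.add_one_le_exp (Real.log g - Real.log lbar)
      rw [Real.exp_sub, Real.exp_log hgpos, Real.exp_log hApos] at h
      linarith
    have h1 : lbar - g ≤ lbar * (Real.log lbar - Real.log g) := by
      have h := mul_le_mul_of_nonneg_left hexp hApos.le
      have e : lbar * (1 - g/lbar) = lbar - g := by field_simp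
      linarith [h, e.symm.le]
    have h2 : lbar * (Real.log lbar - Real.log g)
        ≤ (∑ i, (l i - lbar)^2) / (2 * lmin * D) := by
      have h := mul_le_mul_of_nonneg_left sumU (le_of_lt (show (0:ℝ) < lbar / D by positivity))
      calc lbar * (Real.log lbar - Real.log g)
          = (lbar / D) * ((D:ℝ) * (Real.log lbar - Real.log g)) := by field_simp
        _ ≤ (lbar / D) * ((∑ i, (l i - lbar)^2) / (2 * lmin * lbar)) := h
        _ = (∑ i, (l i - lbar)^2) / (2 * lmin * D) := by field_simp
    calc lbar - g ≤ (∑ i, (l i - lbar)^2) / (2 * lmin * D) := le_trans h1 h2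
      _ = v / (2 * lmin) := by rw [hSv]; ring
end

section
/- Let Σ be a D×D symmetric positive definite matrix with distinct eigenvalues, and suppose A is a product A = S_L Q_L ⋯ S_1 Q_1 of L layers, where each Qℓ is a fixed orthogonal matrix and each Sℓ is a diagonal matrix (the D free parameters of layer ℓ). If the map (S_1,…,S_L) ↦ A Σ Aᵀ is surjective onto a neighborhood of I in the space of symmetric positive definite matrices, then L·D ≥ D(D+1)/2, i.e., L ≥ (D+1)/2. -/
open Matrix

open Module MeasureTheory Set Finset in
/-- A differentiable map from a finite-dimensional space into a strictly
higher-dimensional space cannot cover a nonempty open set. -/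
lemma aux_no_surj {E F : Type*} [NormedAddCommGroup E] [NormedSpace ℝ E] [FiniteDimensional ℝ E]
    [NormedAddCommGroup F] [NormedSpace ℝ F] [FiniteDimensional ℝ F]
    (f : E → F) (hf : Differentiable ℝ f) (hdim : finrank ℝ E < finrank ℝ F)
    (O : Set F) (hO : IsOpen O) (hne : O.Nonempty) (hsub : O ⊆ Set.range f) : False := by
  borelize F
  have hle : finrank ℝ E ≤ finrank ℝ F := hdim.le
  let bE := finBasis ℝ E
  let bF := finBasis ℝ F
  let π : F →ₗ[ℝ] E :=
    (bE.equivFun.symm.toLinearMap).comp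
      ((LinearMap.funLeft ℝ ℝ (Fin.castLE hle)).comp bF.equivFun.toLinearMap)
  have hπ : Function.Surjective π := by
    apply bE.equivFun.symm.surjective.comp
    exact (LinearMap.funLeft_surjective_of_injective ℝ ℝ _ (Fin.castLE_injective hle)).comp
      bF.equivFun.surjective
  let πC : F →L[ℝ] E := LinearMap.toContinuousLinearMap π
  let g : F → F := f ∘ π
  let g' : F → (F →L[ℝ] F) := fun x => (fderiv ℝ f (π x)).comp πC
  have hg : ∀ x ∈ (univ : Set F), HasFDerivWithinAt g (g' x) univ x := by
    intro x _
    exact (((hf (π x)).hasFDerivAt.comp x πC.hasFDerivAt)).hasFDerivWithinAt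
  have hdet : ∀ x ∈ (univ : Set F), (g' x).det = 0 := by
    intro x _
    by_contra hne0
    have hsurjLM : Function.Surjective (g' x).toLinearMap :=
      (LinearMap.equivOfDetNeZero _ hne0).surjective
    have h1 : finrank ℝ (LinearMap.range (g' x).toLinearMap) ≤ finrank ℝ E := by
      have h2 : LinearMap.range (g' x).toLinearMap ≤
          LinearMap.range (fderiv ℝ f (π x)).toLinearMap := by
        have : (g' x).toLinearMap =
            (fderiv ℝ f (π x)).toLinearMap.comp πC.toLinearMap := rfl
        rw [this]
        exact LinearMap.range_comp_le_range _ _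
      exact le_trans (Submodule.finrank_mono h2) (LinearMap.finrank_range_le _)
    rw [LinearMap.range_eq_top.mpr hsurjLM] at h1
    rw [finrank_top] at h1
    omega
  let μ : Measure F := bF.addHaar
  have himg : μ (g '' univ) = 0 :=
    addHaar_image_eq_zero_of_det_fderivWithin_eq_zero μ hg hdet
  have hOr : O ⊆ g '' univ := by
    rw [image_univ]
    intro y hy
    obtain ⟨x, hx⟩ := hsub hy
    obtain ⟨z, hz⟩ := hπ x
    exact ⟨z, by simp [g, hz, hx]⟩
  have : μ O = 0 := measure_mono_null hOr himg
  exact absurd this (hO.measure_pos μ hne).ne'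

/-- The number of pairs `(i,j)` with `i ≤ j` in `Fin D`. -/
lemma card_symIdx (D : ℕ) :
    Fintype.card {p : Fin D × Fin D // p.1 ≤ p.2} = D * (D + 1) / 2 := by
  rw [← Fintype.card_congr (Sym2.sortEquiv (α := Fin D)), Sym2.card]
  simp [Nat.choose_two_right, Fintype.card_fin, Nat.mul_comm]

/-- Build a symmetric matrix from its upper-triangular entries. -/
def mSym (D : ℕ) (w : {p : Fin D × Fin D // p.1 ≤ p.2} → ℝ) : Matrix (Fin D) (Fin D) ℝ :=
  Matrix.of fun i j =>
    if h : i ≤ j then w ⟨(i, j), h⟩ else w ⟨(j, i), le_of_not_ge h⟩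

lemma mSym_transpose (D : ℕ) (w : {p : Fin D × Fin D // p.1 ≤ p.2} → ℝ) :
    (mSym D w)ᵀ = mSym D w := by
  ext i j
  simp only [transpose_apply, mSym, Matrix.of_apply]
  rcases le_total i j with h | h
  · rcases eq_or_lt_of_le h with rfl | hlt
    · simp
    · rw [dif_neg (not_le.mpr hlt), dif_pos h]
  · rcases eq_or_lt_of_le h with rfl | hlt
    · simp
    · rw [dif_pos h, dif_neg (not_le.mpr hlt)]

lemma mSym_apply_le (D : ℕ) (w : {p : Fin D × Fin D // p.1 ≤ p.2} → ℝ)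
    {i j : Fin D} (h : i ≤ j) : mSym D w i j = w ⟨(i, j), h⟩ := by
  simp only [mSym, Matrix.of_apply, dif_pos h]

lemma mSym_one (D : ℕ) :
    mSym D (fun p => (1 : Matrix (Fin D) (Fin D) ℝ) p.1.1 p.1.2) = 1 := by
  ext i j
  simp only [mSym, Matrix.of_apply]
  by_cases h : i ≤ j
  · rw [dif_pos h]
  · rw [dif_neg h]
    simp only [Matrix.one_apply]
    by_cases hij : i = j
    · simp [hij]
    · rw [if_neg hij, if_neg (fun hji => hij hji.symm)]

section DiffLemmas

variable {E' : Type*} [NormedAddCommGroup E'] [NormedSpace ℝ E'] {D : ℕ}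

lemma diff_entry_mul {f g : E' → Matrix (Fin D) (Fin D) ℝ}
    (hf : ∀ i j, Differentiable ℝ fun x => f x i j)
    (hg : ∀ i j, Differentiable ℝ fun x => g x i j) :
    ∀ i j, Differentiable ℝ fun x => (f x * g x) i j := by
  intro i j
  simp only [Matrix.mul_apply]
  exact Differentiable.fun_sum fun k _ => (hf i k).mul (hg k j)

lemma diff_entry_prod :
    ∀ (lst : List (E' → Matrix (Fin D) (Fin D) ℝ)),
      (∀ g ∈ lst, ∀ i j, Differentiable ℝ fun x => g x i j) →
      ∀ i j, Differentiable ℝ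
        fun x => ((List.map (fun g : E' → Matrix (Fin D) (Fin D) ℝ => g x) lst).prod) i j := by
  intro lst
  induction lst with
  | nil =>
    intro _ i j
    simp only [List.map_nil, List.prod_nil]
    exact differentiable_const _
  | cons a t ih =>
    intro h i j
    simp only [List.map_cons, List.prod_cons]
    exact diff_entry_mul (h a List.mem_cons_self)
      (ih (fun g hg => h g (List.mem_cons_of_mem a hg))) i j

end DiffLemmas

open Finset in
lemma posdef_near_one {D : ℕ} (hD : 0 < D) {M : Matrix (Fin D) (Fin D) ℝ} (hsym : Mᵀ = M)
    (hcl : ∀ i j, |M i j - (1 : Matrix (Fin D) (Fin D) ℝ) i j| < 1 / (2 * D)) :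
    M.PosDef := by
  have hD' : (0 : ℝ) < D := by exact_mod_cast hD
  set ε : ℝ := 1 / (2 * D) with hε
  rw [Matrix.posDef_iff_dotProduct_mulVec]
  constructor
  · rw [Matrix.IsHermitian]
    ext i j
    rw [Matrix.conjTranspose_apply, star_trivial, show M j i = Mᵀ i j from rfl, hsym]
  · intro x hx
    set S : ℝ := ∑ i, x i ^ 2 with hSdef
    have hS : 0 < S := by
      have : ∃ i, x i ≠ 0 := by
        by_contra h
        push_neg at h
        exact hx (funext h)
      obtain ⟨i, hi⟩ := this
      exact Finset.sum_pos' (fun j _ => sq_nonneg _) ⟨i, Finset.mem_univ i, by positivity⟩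
    have hxx : dotProduct x x = S := by
      simp [dotProduct, hSdef, sq]
    have key : dotProduct (star x) (M *ᵥ x) = S + dotProduct x ((M - 1) *ᵥ x) := by
      rw [star_trivial, Matrix.sub_mulVec, dotProduct_sub, Matrix.one_mulVec, hxx]
      ring
    have habs : |dotProduct x ((M - 1) *ᵥ x)| ≤ ε * (∑ i, |x i|) ^ 2 := by
      have step1 : |dotProduct x ((M - 1) *ᵥ x)| ≤ ∑ i, |x i| * (ε * ∑ j, |x j|) := by
        simp only [dotProduct, Matrix.mulVec]
        refine le_trans (Finset.abs_sum_le_sum_abs _ _) (Finset.sum_le_sum fun i _ => ?_)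
        rw [abs_mul]
        refine mul_le_mul_of_nonneg_left ?_ (abs_nonneg _)
        refine le_trans (Finset.abs_sum_le_sum_abs _ _) ?_
        rw [Finset.mul_sum]
        refine Finset.sum_le_sum fun j _ => ?_
        rw [abs_mul]
        refine mul_le_mul_of_nonneg_right ?_ (abs_nonneg _)
        have := hcl i j
        rw [Matrix.sub_apply]
        exact this.le
      calc |dotProduct x ((M - 1) *ᵥ x)| ≤ ∑ i, |x i| * (ε * ∑ j, |x j|) := step1
        _ = ε * (∑ i, |x i|) ^ 2 := by rw [← Finset.sum_mul]; ring
    have hcs : (∑ i, |x i|) ^ 2 ≤ D * S := by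
      have := sq_sum_le_card_mul_sum_sq (s := (Finset.univ : Finset (Fin D))) (f := fun i => |x i|)
      simpa [sq_abs, hSdef, Finset.card_univ] using this
    have hbound : |dotProduct x ((M - 1) *ᵥ x)| ≤ S / 2 := by
      refine le_trans habs ?_
      have : ε * (∑ i, |x i|) ^ 2 ≤ ε * (D * S) := by
        refine mul_le_mul_of_nonneg_left hcs ?_
        rw [hε]; positivity
      refine le_trans this ?_
      rw [hε, div_mul_eq_mul_div, one_mul, div_le_div_iff₀ (by positivity) (by norm_num)]
      nlinarith [hS, hD']
    rw [key]
    have := neg_abs_le (dotProduct x ((M - 1) *ᵥ x))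
    linarith

/-- Parameter counting for linear Gaussianization with fixed rotations: if the map
`(S_1,…,S_L) ↦ A Sig Aᵀ`, with `A = S_L Q_L ⋯ S_1 Q_1` (each `Qℓ` a fixed orthogonal
matrix, each `Sℓ` a diagonal matrix with `D` free parameters), is surjective onto a
neighborhood of `I` within the symmetric positive definite matrices, then
`L·D ≥ D(D+1)/2`, i.e. `L ≥ (D+1)/2`. -/
theorem gaussianization_parameter_counting (D L : ℕ) (hD : 0 < D)
    (Sig : Matrix (Fin D) (Fin D) ℝ) (hsymm : Sig.IsSymm) (hpd : Sig.PosDef)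
    (l : Fin D → ℝ) (P : Matrix (Fin D) (Fin D) ℝ)
    (hP : P ∈ Matrix.orthogonalGroup (Fin D) ℝ)
    (hdiag : Sig = P * Matrix.diagonal l * Pᵀ)
    (hdistinct : Function.Injective l)
    (Q : Fin L → Matrix (Fin D) (Fin D) ℝ)
    (hQ : ∀ ℓ, Q ℓ ∈ Matrix.orthogonalGroup (Fin D) ℝ)
    (A : (Fin L → (Fin D → ℝ)) → Matrix (Fin D) (Fin D) ℝ)
    (hA : ∀ s, A s = ((List.ofFn fun ℓ : Fin L => Matrix.diagonal (s ℓ) * Q ℓ).reverse).prod)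
    (hsurj : ∃ U ∈ nhds (1 : Matrix (Fin D) (Fin D) ℝ),
      ∀ M ∈ U, M.IsSymm → M.PosDef → ∃ s, A s * Sig * (A s)ᵀ = M) :
    L * D ≥ D * (D + 1) / 2 ∧ (L : ℝ) ≥ ((D : ℝ) + 1) / 2 := by
  have main : L * D ≥ D * (D + 1) / 2 := by
    by_contra hlt
    push_neg at hlt
    obtain ⟨U, hU, hUsurj⟩ := hsurj
    -- entrywise differentiability of `s ↦ A s`
    have hAdiff : ∀ i j, Differentiable ℝ fun s : Fin L → Fin D → ℝ => A s i j := by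
      set lst : List ((Fin L → Fin D → ℝ) → Matrix (Fin D) (Fin D) ℝ) :=
        (List.ofFn fun ℓ : Fin L =>
          (fun s : Fin L → Fin D → ℝ => Matrix.diagonal (s ℓ) * Q ℓ)).reverse with hlst
      have hform : ∀ s, A s =
          (List.map (fun g : (Fin L → Fin D → ℝ) → Matrix (Fin D) (Fin D) ℝ => g s) lst).prod := by
        intro s
        rw [hA, hlst, List.map_reverse, List.map_ofFn]
        rfl
      have hmem : ∀ g ∈ lst, ∀ i j,
          Differentiable ℝ fun s : Fin L → Fin D → ℝ => g s i j := by
        intro g hg i j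
        rw [hlst, List.mem_reverse, List.mem_ofFn] at hg
        obtain ⟨ℓ, rfl⟩ := hg
        have : (fun s : Fin L → Fin D → ℝ => (Matrix.diagonal (s ℓ) * Q ℓ) i j)
            = fun s : Fin L → Fin D → ℝ => s ℓ i * Q ℓ i j := by
          funext s
          rw [Matrix.diagonal_mul]
        rw [this]
        have hproj : Differentiable ℝ fun s : Fin L → Fin D → ℝ => s ℓ i :=
          ((ContinuousLinearMap.proj i : (Fin D → ℝ) →L[ℝ] ℝ).differentiable).comp
            ((ContinuousLinearMap.proj ℓ :
              (Fin L → Fin D → ℝ) →L[ℝ] (Fin D → ℝ)).differentiable)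
        exact hproj.mul (differentiable_const _)
      intro i j
      have := diff_entry_prod lst hmem i j
      have hfun : (fun s : Fin L → Fin D → ℝ => A s i j) = fun s => ((List.map (fun g : (Fin L → Fin D → ℝ) → Matrix (Fin D) (Fin D) ℝ => g s) lst).prod) i j :=
        funext fun s => congrFun (congrFun (hform s) i) j
      rw [hfun]
      exact this
    -- entrywise differentiability of `s ↦ A s * Sig * (A s)ᵀ`
    have hfdiff : ∀ i j, Differentiable ℝ
        fun s : Fin L → Fin D → ℝ => (A s * Sig * (A s)ᵀ) i j := by
      refine diff_entry_mul (diff_entry_mul hAdiff (fun i j => differentiable_const _)) ?_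
      intro i j
      simp only [Matrix.transpose_apply]
      exact hAdiff j i
    -- the map into the upper-triangular coordinates
    set ftil : (Fin L → Fin D → ℝ) → ({p : Fin D × Fin D // p.1 ≤ p.2} → ℝ) :=
      fun s => fun p => (A s * Sig * (A s)ᵀ) p.1.1 p.1.2 with hftil
    have hftildiff : Differentiable ℝ ftil :=
      differentiable_pi.2 fun p => hfdiff p.1.1 p.1.2
    -- continuity of mSym
    have hmScont : Continuous (mSym D) := by
      apply continuous_pi
      intro i
      apply continuous_pi
      intro j
      by_cases h : i ≤ j
      · simp only [mSym, Matrix.of_apply, dif_pos h]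
        exact continuous_apply _
      · simp only [mSym, Matrix.of_apply, dif_neg h]
        exact continuous_apply _
    have hentry : ∀ i j : Fin D, Continuous fun w : ({p : Fin D × Fin D // p.1 ≤ p.2} → ℝ) => mSym D w i j := by
      intro i j
      by_cases h : i ≤ j
      · simp only [mSym, Matrix.of_apply, dif_pos h]
        exact continuous_apply _
      · simp only [mSym, Matrix.of_apply, dif_neg h]
        exact continuous_apply _
    -- the open set O
    set O : Set ({p : Fin D × Fin D // p.1 ≤ p.2} → ℝ) := (mSym D) ⁻¹' (interior U) ∩
        ⋂ i : Fin D, ⋂ j : Fin D,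
          {w : ({p : Fin D × Fin D // p.1 ≤ p.2} → ℝ) | |mSym D w i j - (1 : Matrix (Fin D) (Fin D) ℝ) i j| < 1 / (2 * D)} with hO
    have hOopen : IsOpen O := by
      refine IsOpen.inter (isOpen_interior.preimage hmScont) ?_
      refine isOpen_iInter_of_finite fun i => isOpen_iInter_of_finite fun j => ?_
      exact isOpen_lt (((hentry i j).sub continuous_const).abs) continuous_const
    have hDpos : (0 : ℝ) < 1 / (2 * D) := by
      have : (0 : ℝ) < D := by exact_mod_cast hD
      positivity
    have hOne : O.Nonempty := by
      refine ⟨fun p => (1 : Matrix (Fin D) (Fin D) ℝ) p.1.1 p.1.2, ?_, ?_⟩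
      · rw [Set.mem_preimage, mSym_one]
        exact mem_interior_iff_mem_nhds.2 hU
      · simp only [Set.mem_iInter, Set.mem_setOf_eq, mSym_one]
        intro i j
        simpa using hDpos
    have hOsub : O ⊆ Set.range ftil := by
      rintro w ⟨hw1, hw2⟩
      simp only [Set.mem_iInter, Set.mem_setOf_eq] at hw2
      have hMsym : (mSym D w)ᵀ = mSym D w := mSym_transpose D w
      have hMU : mSym D w ∈ U := interior_subset hw1
      have hMpd : (mSym D w).PosDef := posdef_near_one hD hMsym (fun i j => hw2 i j)
      obtain ⟨s, hs⟩ := hUsurj (mSym D w) hMU hMsym hMpd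
      refine ⟨s, ?_⟩
      funext p
      rw [hftil]
      simp only
      rw [hs, mSym_apply_le D w p.2]
    -- dimensions
    have hdimE : Module.finrank ℝ (Fin L → Fin D → ℝ) = L * D := by
      rw [Module.finrank_pi_fintype]
      simp [Module.finrank_fintype_fun_eq_card, Fintype.card_fin, Finset.sum_const, mul_comm]
    have hdimW : Module.finrank ℝ ({p : Fin D × Fin D // p.1 ≤ p.2} → ℝ) = D * (D + 1) / 2 := by
      rw [Module.finrank_fintype_fun_eq_card, card_symIdx]
    exact aux_no_surj ftil hftildiff (by rw [hdimE, hdimW]; exact hlt) O hOopen hOne hOsub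
  refine ⟨main, ?_⟩
  have heven : D * (D + 1) / 2 * 2 = D * (D + 1) :=
    Nat.div_mul_cancel (Nat.even_mul_succ_self D).two_dvd
  have h2 : D * (D + 1) ≤ 2 * (L * D) := by omega
  have h3 : D + 1 ≤ 2 * L := by
    have : D * (D + 1) ≤ D * (2 * L) := by ring_nf; ring_nf at h2; omega
    exact Nat.le_of_mul_le_mul_left this hD
  have h3' : (D : ℝ) + 1 ≤ 2 * L := by exact_mod_cast h3
  linarith
end
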